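/- For k ∈ ℕ let m(k) = ⌊k/6⌋ and D(k) = ∏_{i=0}^{m(k)-1} (k - 6i - 1)(k - 6i - 2), with D(k) = 1 when m(k) = 0. Then for every R > 0, the series ∑_{k=0}^∞ (2^{m(k)} / D(k))·R^k converges. -/

import Mathlib

/-! Each factor of `D k` is at least `m - i` with `m = ⌊k/6⌋`, so `D k ≥ m!`. Writing
`k = 6m + r` with `r < 6`, the `k`-th term is then at most `(1 + R)^5 (2R^6)^m / m!`: the
exponential series of `2R^6`, each term repeated six times. -/

noncomputable def vimMajorantDenom (k : ℕ) : ℝ :=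
  ∏ i ∈ Finset.range (k / 6), (((k : ℝ) - 6 * (i : ℝ) - 1) * ((k : ℝ) - 6 * (i : ℝ) - 2))

open Finset Nat

theorem Summable.comp_nat_div {f : ℕ → ℝ} (hf : Summable f) (n : ℕ) [NeZero n] :
    Summable fun k => f (k / n) := by
  have hprod : Summable fun p : ℕ × Fin n => |f p.1| :=
    (summable_prod_of_nonneg fun _ => abs_nonneg _).2
      ⟨fun _ => .of_finite, by simpa using hf.abs.mul_left (n : ℝ)⟩
  exact .of_abs ((Nat.divModEquiv n).summable_iff.2 hprod)

theorem factorial_le_vimMajorantDenom (k : ℕ) : ((k / 6)! : ℝ) ≤ vimMajorantDenom k := by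
  have hk : 6 * ((k / 6 : ℕ) : ℝ) ≤ k := by exact_mod_cast Nat.mul_div_le k 6
  rw [← descFactorial_self, descFactorial_eq_prod_range, cast_prod, vimMajorantDenom]
  refine prod_le_prod (fun i _ => by positivity) fun i hi => ?_
  rw [mem_range] at hi
  have hi' : (i : ℝ) + 1 ≤ (k / 6 : ℕ) := by exact_mod_cast hi
  rw [cast_sub hi.le]
  nlinarith

theorem vimMajorantDenom_pos (k : ℕ) : 0 < vimMajorantDenom k :=
  (cast_pos.2 (factorial_pos _)).trans_le (factorial_le_vimMajorantDenom k)

/-- for every `R > 0`, the majorant series `∑ (2^{⌊k/6⌋}/D k) R^k`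
converges. -/
theorem vim_majorant_series_summable :
    ∀ R : ℝ, 0 < R →
      Summable (fun k : ℕ => (2 ^ (k / 6) / vimMajorantDenom k) * R ^ k) := by
  intro R hR
  have hexp : Summable fun k : ℕ => (1 + R) ^ 5 * ((2 * R ^ 6) ^ (k / 6) / (k / 6)!) :=
    ((Real.summable_pow_div_factorial _).comp_nat_div 6).mul_left _
  refine hexp.of_nonneg_of_le (fun k => by have := vimMajorantDenom_pos k; positivity) fun k => ?_
  have hD := factorial_le_vimMajorantDenom k
  have hsplit : R ^ k = (R ^ 6) ^ (k / 6) * R ^ (k % 6) := by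
    rw [← pow_mul, ← pow_add, Nat.div_add_mod]
  have hrem : R ^ (k % 6) ≤ (1 + R) ^ 5 :=
    (pow_le_pow_left₀ hR.le (by linarith) _).trans
      (pow_le_pow_right₀ (by linarith) (Nat.le_of_lt_succ (Nat.mod_lt k (by norm_num))))
  calc 2 ^ (k / 6) / vimMajorantDenom k * R ^ k
      = (2 * R ^ 6) ^ (k / 6) / vimMajorantDenom k * R ^ (k % 6) := by
        rw [hsplit, mul_pow]
        ring
    _ ≤ (2 * R ^ 6) ^ (k / 6) / (k / 6)! * (1 + R) ^ 5 := by gcongr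
    _ = _ := mul_comm _ _
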